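/- arXiv:1512.01069 — 4 statements merged into one kernel-verified Lean document; each statement's English description precedes it below -/
import Mathlib

section
/- Let (p_k)_{k≥1} be a nonincreasing sequence in [0,1], let θ ∈ (0,1] and C > 0. If lim_{n→∞} n^{−θ} Σ_{k=1}^n p_k = C, then lim_{n→∞} n^{1−θ} p_n = θ C. -/
/-!
Write `S n = ∑_{k=1}^n p k`. For `c ≠ 1` and `m = ⌈c n⌉`, monotonicity of `p` traps `p n` on one
side of the difference quotient `(S m - S n) / (m - n)` (above it when `c > 1`, below it when
`c < 1`), while `S n ~ C n^θ` makes `n^{1-θ}` times that quotient tend to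
`C (c^θ - 1) / (c - 1)`. Letting `c → 1` from either side, this tends to `θ C`, the derivative
of `C x^θ` at `x = 1`.
-/

open Filter Finset Topology

theorem tendsto_of_squeeze_families {α ι β : Type*} [TopologicalSpace β] [LinearOrder β]
    [OrderTopology β] {l : Filter α} {F G : Filter ι} [F.NeBot] [G.NeBot]
    {f : α → β} {g : ι → α → β} {L : ι → β} {b : β}
    (hLF : Tendsto L F (𝓝 b)) (hLG : Tendsto L G (𝓝 b))
    (hgF : ∀ᶠ c in F, Tendsto (g c) l (𝓝 (L c))) (hgG : ∀ᶠ c in G, Tendsto (g c) l (𝓝 (L c)))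
    (hF : ∀ᶠ c in F, g c ≤ᶠ[l] f) (hG : ∀ᶠ c in G, f ≤ᶠ[l] g c) :
    Tendsto f l (𝓝 b) := by
  refine tendsto_order.2 ⟨fun a ha => ?_, fun a ha => ?_⟩
  · obtain ⟨c, hLc, hgc, hle⟩ := ((hLF.eventually (lt_mem_nhds ha)).and (hgF.and hF)).exists
    filter_upwards [hgc.eventually (lt_mem_nhds hLc), hle] with n h₁ h₂ using h₁.trans_le h₂
  · obtain ⟨c, hLc, hgc, hle⟩ := ((hLG.eventually (gt_mem_nhds ha)).and (hgG.and hG)).exists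
    filter_upwards [hgc.eventually (gt_mem_nhds hLc), hle] with n h₁ h₂ using h₂.trans_lt h₁

theorem sum_Icc_sub_sum_Icc {M : Type*} [AddCommGroup M] (p : ℕ → M) {a b : ℕ} (h : a ≤ b) :
    ∑ k ∈ Icc 1 b, p k - ∑ k ∈ Icc 1 a, p k = ∑ k ∈ Ioc a b, p k := by
  rw [sub_eq_iff_eq_add']
  exact (sum_Ioc_consecutive p (Nat.zero_le a) h).symm

section Antitone

variable {p : ℕ → ℝ}

theorem sum_Icc_slope_le_of_antitoneOn (hp : AntitoneOn p {k | 1 ≤ k}) {n m : ℕ} (hn : 1 ≤ n)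
    (h : n < m) :
    (∑ k ∈ Icc 1 m, p k - ∑ k ∈ Icc 1 n, p k) / ((m : ℝ) - n) ≤ p n := by
  rw [div_le_iff₀ (sub_pos.2 (by exact_mod_cast h)), sum_Icc_sub_sum_Icc p h.le]
  calc ∑ k ∈ Ioc n m, p k ≤ #(Ioc n m) • p n :=
        sum_le_card_nsmul _ _ _ fun k hk => hp hn (show 1 ≤ k by grind) (mem_Ioc.1 hk).1.le
    _ = p n * ((m : ℝ) - n) := by rw [Nat.card_Ioc, nsmul_eq_mul, Nat.cast_sub h.le, mul_comm]

theorem le_sum_Icc_slope_of_antitoneOn (hp : AntitoneOn p {k | 1 ≤ k}) {n m : ℕ} (h : m < n) :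
    p n ≤ (∑ k ∈ Icc 1 m, p k - ∑ k ∈ Icc 1 n, p k) / ((m : ℝ) - n) := by
  rw [← neg_div_neg_eq, neg_sub, neg_sub, le_div_iff₀ (sub_pos.2 (by exact_mod_cast h)),
    sum_Icc_sub_sum_Icc p h.le]
  calc p n * ((n : ℝ) - m) = #(Ioc m n) • p n := by
        rw [Nat.card_Ioc, nsmul_eq_mul, Nat.cast_sub h.le, mul_comm]
    _ ≤ ∑ k ∈ Ioc m n, p k :=
        card_nsmul_le_sum _ _ _ fun k hk => hp (show 1 ≤ k by grind) (show 1 ≤ n by omega)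
          (mem_Ioc.1 hk).2

theorem eventually_rpow_mul_sum_Icc_slope_le (hp : AntitoneOn p {k | 1 ≤ k}) (θ : ℝ)
    {m : ℕ → ℕ} {c : ℝ} (hm : Tendsto (fun n : ℕ => (m n : ℝ) / n) atTop (𝓝 c)) (hc : 1 < c) :
    ∀ᶠ n : ℕ in atTop, (n : ℝ) ^ (1 - θ) *
      ((∑ k ∈ Icc 1 (m n), p k - ∑ k ∈ Icc 1 n, p k) / ((m n : ℝ) - n)) ≤
        (n : ℝ) ^ (1 - θ) * p n := by
  filter_upwards [eventually_gt_atTop 0, hm.eventually (lt_mem_nhds hc)] with n hn hmn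
  rw [one_lt_div (by positivity)] at hmn
  exact mul_le_mul_of_nonneg_left
    (sum_Icc_slope_le_of_antitoneOn hp hn (by exact_mod_cast hmn)) (by positivity)

theorem eventually_rpow_mul_le_sum_Icc_slope (hp : AntitoneOn p {k | 1 ≤ k}) (θ : ℝ)
    {m : ℕ → ℕ} {c : ℝ} (hm : Tendsto (fun n : ℕ => (m n : ℝ) / n) atTop (𝓝 c)) (hc : c < 1) :
    ∀ᶠ n : ℕ in atTop, (n : ℝ) ^ (1 - θ) * p n ≤ (n : ℝ) ^ (1 - θ) *
      ((∑ k ∈ Icc 1 (m n), p k - ∑ k ∈ Icc 1 n, p k) / ((m n : ℝ) - n)) := by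
  filter_upwards [eventually_gt_atTop 0, hm.eventually (gt_mem_nhds hc)] with n hn hmn
  rw [div_lt_one (by positivity)] at hmn
  exact mul_le_mul_of_nonneg_left
    (le_sum_Icc_slope_of_antitoneOn hp (by exact_mod_cast hmn)) (by positivity)

end Antitone

theorem rpow_one_sub_mul_div_eq (θ a b : ℝ) {x y : ℝ} (hx : 0 < x) (hy : 0 < y) :
    x ^ (1 - θ) * ((b - a) / (y - x)) =
      (y ^ (-θ) * b * (y / x) ^ θ - x ^ (-θ) * a) / (y / x - 1) := by
  rcases eq_or_ne y x with rfl | hyx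
  · simp [div_self hy.ne']
  rw [Real.div_rpow hy.le hx.le, Real.rpow_neg hy.le, Real.rpow_neg hx.le,
    Real.rpow_sub hx, Real.rpow_one]
  have : y - x ≠ 0 := sub_ne_zero.2 hyx
  field_simp

theorem tendsto_atTop_of_tendsto_div_natCast {m : ℕ → ℕ} {c : ℝ} (hc : 0 < c)
    (hm : Tendsto (fun n : ℕ => (m n : ℝ) / n) atTop (𝓝 c)) : Tendsto m atTop atTop := by
  refine tendsto_natCast_atTop_iff.1
    ((Tendsto.pos_mul_atTop hc hm tendsto_natCast_atTop_atTop).congr' ?_)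
  filter_upwards [eventually_ne_atTop 0] with n hn
  field_simp

theorem tendsto_rpow_one_sub_mul_slope {S : ℕ → ℝ} {θ C c : ℝ} {m : ℕ → ℕ}
    (hS : Tendsto (fun n : ℕ => (n : ℝ) ^ (-θ) * S n) atTop (𝓝 C))
    (hm : Tendsto (fun n : ℕ => (m n : ℝ) / n) atTop (𝓝 c)) (hc0 : 0 < c) (hc1 : c ≠ 1) :
    Tendsto (fun n : ℕ => (n : ℝ) ^ (1 - θ) * ((S (m n) - S n) / ((m n : ℝ) - n))) atTop
      (𝓝 (C * slope (fun x => x ^ θ) 1 c)) := by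
  have hmS := hS.comp (tendsto_atTop_of_tendsto_div_natCast hc0 hm)
  have hlim : Tendsto (fun n : ℕ => ((m n : ℝ) ^ (-θ) * S (m n) * ((m n : ℝ) / n) ^ θ -
      (n : ℝ) ^ (-θ) * S n) / ((m n : ℝ) / n - 1)) atTop (𝓝 ((C * c ^ θ - C) / (c - 1))) :=
    ((hmS.mul (hm.rpow_const (p := θ) (Or.inl hc0.ne'))).sub hS).div (hm.sub_const 1)
    (sub_ne_zero.2 hc1)
  rw [slope_def_field, Real.one_rpow, mul_div_assoc', mul_sub, mul_one]
  refine hlim.congr' ?_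
  filter_upwards [eventually_gt_atTop 0, hm.eventually (lt_mem_nhds hc0)] with n hn hmn
  have hn : (0 : ℝ) < n := by exact_mod_cast hn
  exact (rpow_one_sub_mul_div_eq θ _ _ hn ((div_pos_iff_of_pos_right hn).1 hmn)).symm

theorem tauberian_nonincreasing_general (p : ℕ → ℝ)
    (hmono : ∀ k : ℕ, 1 ≤ k → p (k + 1) ≤ p k)
    (θ C : ℝ)
    (hlim : Filter.Tendsto (fun n : ℕ => (n : ℝ) ^ (-θ) * ∑ k ∈ Finset.Icc 1 n, p k)
      Filter.atTop (nhds C)) :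
    Filter.Tendsto (fun n : ℕ => (n : ℝ) ^ (1 - θ) * p n) Filter.atTop (nhds (θ * C)) := by
  have hp : AntitoneOn p {k | 1 ≤ k} := antitoneOn_nat_Ici_of_succ_le hmono
  have hslope : Tendsto (fun c => C * slope (fun x : ℝ => x ^ θ) 1 c) (𝓝[≠] 1) (𝓝 (θ * C)) := by
    simpa [mul_comm] using (hasDerivAt_iff_tendsto_slope.1
      (Real.hasDerivAt_rpow_const (x := 1) (p := θ) (Or.inl one_ne_zero))).const_mul C
  have hceil (c : ℝ) (hc : 0 ≤ c) : Tendsto (fun n : ℕ => (⌈c * n⌉₊ : ℝ) / n) atTop (𝓝 c) :=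
    (tendsto_nat_ceil_mul_div_atTop hc).comp tendsto_natCast_atTop_atTop
  have hg : ∀ᶠ (c : ℝ) in 𝓝[≠] 1, Tendsto (fun n : ℕ => (n : ℝ) ^ (1 - θ) *
      ((∑ k ∈ Icc 1 ⌈c * n⌉₊, p k - ∑ k ∈ Icc 1 n, p k) / ((⌈c * n⌉₊ : ℝ) - n)))
      atTop (𝓝 (C * slope (fun x : ℝ => x ^ θ) 1 c)) := by
    filter_upwards [(eventually_gt_nhds one_pos).filter_mono nhdsWithin_le_nhds,
      self_mem_nhdsWithin] with c hc0 hc1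
    exact tendsto_rpow_one_sub_mul_slope (S := fun n => ∑ k ∈ Icc 1 n, p k) hlim
      (hceil c hc0.le) hc0 hc1
  refine tendsto_of_squeeze_families
    (hslope.mono_left (nhdsGT_le_nhdsNE 1)) (hslope.mono_left (nhdsLT_le_nhdsNE 1))
    (hg.filter_mono (nhdsGT_le_nhdsNE 1)) (hg.filter_mono (nhdsLT_le_nhdsNE 1)) ?_ ?_
  · filter_upwards [self_mem_nhdsWithin] with c (hc : 1 < c)
    exact eventually_rpow_mul_sum_Icc_slope_le hp θ (hceil c (by linarith)) hc
  · filter_upwards [self_mem_nhdsWithin,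
      (eventually_gt_nhds one_pos).filter_mono nhdsWithin_le_nhds] with c (hc : c < 1) hc0
    exact eventually_rpow_mul_le_sum_Icc_slope hp θ (hceil c hc0.le) hc

/-- Tauberian lemma for nonincreasing sequences: if `(p k)` is nonincreasing in `[0,1]`
(for `k ≥ 1`), `θ ∈ (0,1]`, `C > 0` and `n^{−θ} ∑_{k=1}^n p k → C`, then
`n^{1−θ} p n → θ C`. -/
theorem tauberian_nonincreasing (p : ℕ → ℝ)
    (hp0 : ∀ k : ℕ, 1 ≤ k → 0 ≤ p k) (hp1 : ∀ k : ℕ, 1 ≤ k → p k ≤ 1)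
    (hmono : ∀ k : ℕ, 1 ≤ k → p (k + 1) ≤ p k)
    (θ C : ℝ) (hθ0 : 0 < θ) (hθ1 : θ ≤ 1) (hC : 0 < C)
    (hlim : Filter.Tendsto (fun n : ℕ => (n : ℝ) ^ (-θ) * ∑ k ∈ Finset.Icc 1 n, p k)
      Filter.atTop (nhds C)) :
    Filter.Tendsto (fun n : ℕ => (n : ℝ) ^ (1 - θ) * p n) Filter.atTop (nhds (θ * C)) :=
  tauberian_nonincreasing_general p hmono θ C hlim
end

section
/- Let (p_k)_{k≥1} be a nonincreasing sequence in [0,1] and θ ∈ (0,1]. Set C₋ := liminf_{n→∞} n^{−θ} Σ_{k=1}^n p_k and C₊ := limsup_{n→∞} n^{−θ} Σ_{k=1}^n p_k, and assume C₊ < ∞. Then for every real y > 1, liminf_{n→∞} n^{1−θ} p_n ≥ (y^θ C₋ − C₊)/(y − 1), and for every real x ∈ (0,1), limsup_{n→∞} n^{1−θ} p_n ≤ (C₊ − x^θ C₋)/(1 − x). In particular, if 0 < C₋ ≤ C₊ < ∞, then 0 < liminf_{n→∞} n^{1−θ} p_n ≤ limsup_{n→∞} n^{1−θ} p_n < ∞.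 -/
/-!
Since `p` is nonincreasing, the partial sums `S n = ∑_{k=1}^n p k` are concave:
`S m - S n ≤ (m - n) p n` for every `m` and every `n ≥ 1`. Taking `m = ⌈t n⌉` and dividing by
`n^θ` gives, with `f n = n^{-θ} S n` and `g n = n^{1-θ} p n`,
`t^θ f (⌈t n⌉) - f n ≤ (t - 1) g n + o(1)`. Passing to the limit, `(t - 1) g n` is eventually
at least `t^θ liminf f - limsup f - ε`: for `t = y > 1` this is the lower bound on `liminf g`,
for `t = x < 1` the upper bound on `limsup g`, and for `t = 1/2` it shows that `g` is bounded.
-/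

open Filter Finset Topology

noncomputable def rescaledPartialSum (θ : ℝ) (p : ℕ → ℝ) (n : ℕ) : ℝ :=
  (n : ℝ) ^ (-θ) * ∑ k ∈ Icc 1 n, p k

noncomputable def rescaledTerm (θ : ℝ) (p : ℕ → ℝ) (n : ℕ) : ℝ := (n : ℝ) ^ (1 - θ) * p n

theorem rpow_mul_rpow_neg_le {t m n θ : ℝ} (ht : 0 < t) (hn : 0 < n) (htm : t * n ≤ m)
    (hθ : 0 ≤ θ) : t ^ θ * m ^ (-θ) ≤ n ^ (-θ) := by
  have hm : 0 < m := (mul_pos ht hn).trans_le htm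
  rw [Real.rpow_neg hm.le, Real.rpow_neg hn.le, ← div_eq_mul_inv, ← Real.div_rpow ht.le hm.le,
    ← Real.inv_rpow hn.le]
  refine Real.rpow_le_rpow (div_nonneg ht.le hm.le) ?_ hθ
  rw [div_le_iff₀ hm, ← div_eq_inv_mul, le_div_iff₀ hn]
  exact htm

theorem eventually_mul_liminf_sub_limsup_sub_lt {ι : Type*} {l : Filter ι} {v r : ι → ℝ}
    {m : ι → ι} {a ε : ℝ} (ha : 0 ≤ a) (hε : 0 < ε) (hm : Tendsto m l l)
    (hr : Tendsto r l (𝓝 0)) (hv_ge : IsBoundedUnder (· ≥ ·) l v)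
    (hv_le : IsBoundedUnder (· ≤ ·) l v) :
    ∀ᶠ i in l, a * liminf v l - limsup v l - ε < a * v (m i) - v i - r i := by
  set δ := ε / (a + 2)
  have hδ : 0 < δ := by positivity
  have hδε : (a + 2) * δ = ε := mul_div_cancel₀ ε (by positivity)
  filter_upwards [hm.eventually (eventually_lt_of_lt_liminf (sub_lt_self _ hδ) hv_ge),
    eventually_lt_of_limsup_lt (lt_add_of_pos_right _ hδ) hv_le,
    hr.eventually (gt_mem_nhds hδ)] with i hvm hv hri
  nlinarith [mul_le_mul_of_nonneg_left hvm.le ha]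

section

variable {p : ℕ → ℝ} {θ : ℝ}

theorem sum_Icc_one_sub_sum_Icc_one {n m : ℕ} (hnm : n ≤ m) :
    ∑ k ∈ Icc 1 m, p k - ∑ k ∈ Icc 1 n, p k = ∑ k ∈ Ioc n m, p k := by
  have hIoc (j : ℕ) : Icc 1 j = Ioc 0 j := Icc_add_one_left_eq_Ioc 0 j
  rw [hIoc, hIoc, ← sum_Ioc_consecutive p n.zero_le hnm, add_sub_cancel_left]

theorem sum_Icc_one_sub_sum_Icc_one_le (hp : AntitoneOn p (Set.Ici 1)) {n : ℕ} (hn : 1 ≤ n)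
    (m : ℕ) : ∑ k ∈ Icc 1 m, p k - ∑ k ∈ Icc 1 n, p k ≤ ((m : ℝ) - n) * p n := by
  rcases le_total n m with hnm | hmn
  · rw [sum_Icc_one_sub_sum_Icc_one hnm, ← Nat.cast_sub hnm, ← Nat.card_Ioc, ← nsmul_eq_mul]
    refine sum_le_card_nsmul _ _ _ fun k hk => ?_
    have hk := mem_Ioc.1 hk
    exact hp (Set.mem_Ici.2 hn) (Set.mem_Ici.2 (by omega)) hk.1.le
  · have key : ((n - m : ℕ) : ℝ) * p n ≤ ∑ k ∈ Ioc m n, p k := by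
      rw [← Nat.card_Ioc, ← nsmul_eq_mul]
      refine card_nsmul_le_sum _ _ _ fun k hk => ?_
      have hk := mem_Ioc.1 hk
      exact hp (Set.mem_Ici.2 (by omega)) (Set.mem_Ici.2 hn) hk.2
    rw [← sum_Icc_one_sub_sum_Icc_one hmn, Nat.cast_sub hmn] at key
    linarith

theorem tendsto_rpow_neg_mul_of_antitoneOn (hp0 : ∀ k, 1 ≤ k → 0 ≤ p k)
    (hp : AntitoneOn p (Set.Ici 1)) (hθ : 0 < θ) :
    Tendsto (fun n : ℕ => (n : ℝ) ^ (-θ) * p n) atTop (𝓝 0) := by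
  refine ((tendsto_rpow_neg_atTop hθ).comp tendsto_natCast_atTop_atTop).zero_mul_isBoundedUnder_le
    ⟨p 1, eventually_map.2 (eventually_atTop.2 ⟨1, fun n hn => ?_⟩)⟩
  rw [Function.comp_apply, Real.norm_of_nonneg (hp0 n hn)]
  exact hp (Set.mem_Ici.2 le_rfl) (Set.mem_Ici.2 hn) hn

theorem rpow_mul_rescaledPartialSum_ceil_sub_le (hp0 : ∀ k, 1 ≤ k → 0 ≤ p k)
    (hp : AntitoneOn p (Set.Ici 1)) (hθ : 0 ≤ θ) {t : ℝ} (ht : 0 < t) {n : ℕ}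
    (hn : 1 ≤ n) :
    t ^ θ * rescaledPartialSum θ p ⌈t * n⌉₊ - rescaledPartialSum θ p n
      ≤ (t - 1) * rescaledTerm θ p n + (n : ℝ) ^ (-θ) * p n := by
  set m := ⌈t * n⌉₊
  have hn' : (0 : ℝ) < n := by exact_mod_cast hn
  have hpn := hp0 n hn
  have hSm : 0 ≤ ∑ k ∈ Icc 1 m, p k :=
    sum_nonneg fun k hk => hp0 k (mem_Icc.1 hk).1
  have hweight : t ^ θ * (m : ℝ) ^ (-θ) ≤ (n : ℝ) ^ (-θ) :=
    rpow_mul_rpow_neg_le ht hn' (Nat.le_ceil _) hθ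
  have hgap : ((m : ℝ) - n) * p n ≤ ((t - 1) * n + 1) * p n := by
    have := Nat.ceil_lt_add_one (mul_pos ht hn').le
    gcongr
    linarith
  have hchord := sum_Icc_one_sub_sum_Icc_one_le hp hn m
  have hrpow : (n : ℝ) ^ (1 - θ) = n * (n : ℝ) ^ (-θ) := by
    rw [sub_eq_add_neg, Real.rpow_add hn', Real.rpow_one]
  unfold rescaledPartialSum rescaledTerm
  rw [hrpow]
  calc t ^ θ * ((m : ℝ) ^ (-θ) * ∑ k ∈ Icc 1 m, p k) - (n : ℝ) ^ (-θ) * ∑ k ∈ Icc 1 n, p k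
      ≤ (n : ℝ) ^ (-θ) * (∑ k ∈ Icc 1 m, p k - ∑ k ∈ Icc 1 n, p k) := by
        rw [← mul_assoc, mul_sub]
        gcongr
    _ ≤ (n : ℝ) ^ (-θ) * (((t - 1) * n + 1) * p n) := by gcongr; linarith
    _ = (t - 1) * (n * (n : ℝ) ^ (-θ) * p n) + (n : ℝ) ^ (-θ) * p n := by ring

theorem eventually_lt_sub_one_mul_rescaledTerm (hp0 : ∀ k, 1 ≤ k → 0 ≤ p k)
    (hp : AntitoneOn p (Set.Ici 1)) (hθ : 0 < θ)
    (hbdd : IsBoundedUnder (· ≤ ·) atTop (rescaledPartialSum θ p)) {t ε : ℝ} (ht : 0 < t)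
    (hε : 0 < ε) :
    ∀ᶠ n in atTop, t ^ θ * liminf (rescaledPartialSum θ p) atTop
      - limsup (rescaledPartialSum θ p) atTop - ε < (t - 1) * rescaledTerm θ p n := by
  have hceil : Tendsto (fun n : ℕ => ⌈t * n⌉₊) atTop atTop :=
    tendsto_nat_ceil_atTop.comp (tendsto_natCast_atTop_atTop.const_mul_atTop ht)
  have hsum_nonneg : ∀ n, 0 ≤ rescaledPartialSum θ p n := fun n =>
    mul_nonneg (Real.rpow_nonneg n.cast_nonneg _)
      (sum_nonneg fun k hk => hp0 k (mem_Icc.1 hk).1)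
  filter_upwards [eventually_mul_liminf_sub_limsup_sub_lt (Real.rpow_nonneg ht.le θ) hε hceil
    (tendsto_rpow_neg_mul_of_antitoneOn hp0 hp hθ) (isBoundedUnder_of_eventually_ge
      (Eventually.of_forall hsum_nonneg)) hbdd, eventually_ge_atTop 1] with n hlim hn
  linarith [rpow_mul_rescaledPartialSum_ceil_sub_le hp0 hp hθ.le ht hn]

theorem isBoundedUnder_ge_rescaledTerm (hp0 : ∀ k, 1 ≤ k → 0 ≤ p k) :
    IsBoundedUnder (· ≥ ·) atTop (rescaledTerm θ p) :=
  isBoundedUnder_of_eventually_ge <| eventually_atTop.2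
    ⟨1, fun n hn => mul_nonneg (Real.rpow_nonneg n.cast_nonneg _) (hp0 n hn)⟩

theorem isBoundedUnder_le_rescaledTerm (hp0 : ∀ k, 1 ≤ k → 0 ≤ p k)
    (hp : AntitoneOn p (Set.Ici 1)) (hθ : 0 < θ)
    (hbdd : IsBoundedUnder (· ≤ ·) atTop (rescaledPartialSum θ p)) :
    IsBoundedUnder (· ≤ ·) atTop (rescaledTerm θ p) := by
  refine isBoundedUnder_of_eventually_le (a := 2 * (limsup (rescaledPartialSum θ p) atTop + 1
    - (1 / 2) ^ θ * liminf (rescaledPartialSum θ p) atTop)) ?_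
  filter_upwards [eventually_lt_sub_one_mul_rescaledTerm hp0 hp hθ hbdd one_half_pos one_pos]
    with n hn
  linarith

theorem div_le_liminf_rescaledTerm (hp0 : ∀ k, 1 ≤ k → 0 ≤ p k)
    (hp : AntitoneOn p (Set.Ici 1)) (hθ : 0 < θ)
    (hbdd : IsBoundedUnder (· ≤ ·) atTop (rescaledPartialSum θ p)) {y : ℝ} (hy : 1 < y) :
    (y ^ θ * liminf (rescaledPartialSum θ p) atTop - limsup (rescaledPartialSum θ p) atTop)
      / (y - 1) ≤ liminf (rescaledTerm θ p) atTop := by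
  have hy1 : 0 < y - 1 := sub_pos.2 hy
  refine (le_liminf_iff (isBoundedUnder_le_rescaledTerm hp0 hp hθ hbdd).isCoboundedUnder_ge
    (isBoundedUnder_ge_rescaledTerm hp0)).2 fun c hc => ?_
  rw [lt_div_iff₀ hy1] at hc
  filter_upwards [eventually_lt_sub_one_mul_rescaledTerm hp0 hp hθ hbdd (zero_lt_one.trans hy)
    (sub_pos.2 hc)] with n hn
  exact lt_of_mul_lt_mul_left (by linarith) hy1.le

theorem limsup_rescaledTerm_le_div (hp0 : ∀ k, 1 ≤ k → 0 ≤ p k)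
    (hp : AntitoneOn p (Set.Ici 1)) (hθ : 0 < θ)
    (hbdd : IsBoundedUnder (· ≤ ·) atTop (rescaledPartialSum θ p)) {x : ℝ} (hx0 : 0 < x)
    (hx1 : x < 1) :
    limsup (rescaledTerm θ p) atTop ≤ (limsup (rescaledPartialSum θ p) atTop
      - x ^ θ * liminf (rescaledPartialSum θ p) atTop) / (1 - x) := by
  have hx1' : 0 < 1 - x := sub_pos.2 hx1
  refine (limsup_le_iff (isBoundedUnder_ge_rescaledTerm hp0).isCoboundedUnder_le
    (isBoundedUnder_le_rescaledTerm hp0 hp hθ hbdd)).2 fun c hc => ?_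
  rw [gt_iff_lt, div_lt_iff₀ hx1'] at hc
  filter_upwards [eventually_lt_sub_one_mul_rescaledTerm hp0 hp hθ hbdd hx0 (sub_pos.2 hc)]
    with n hn
  exact lt_of_mul_lt_mul_left (by linarith) hx1'.le

theorem liminf_rescaledTerm_pos (hp0 : ∀ k, 1 ≤ k → 0 ≤ p k)
    (hp : AntitoneOn p (Set.Ici 1)) (hθ : 0 < θ)
    (hbdd : IsBoundedUnder (· ≤ ·) atTop (rescaledPartialSum θ p))
    (hpos : 0 < liminf (rescaledPartialSum θ p) atTop) :
    0 < liminf (rescaledTerm θ p) atTop := by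
  obtain ⟨y, hy, hy1⟩ := ((tendsto_rpow_atTop hθ).eventually_gt_atTop
    (limsup (rescaledPartialSum θ p) atTop / liminf (rescaledPartialSum θ p) atTop)).and
    (eventually_gt_atTop 1) |>.exists
  rw [div_lt_iff₀ hpos] at hy
  exact (div_pos (sub_pos.2 hy) (sub_pos.2 hy1)).trans_le
    (div_le_liminf_rescaledTerm hp0 hp hθ hbdd hy1)

end

theorem tauberian_two_sided_general (p : ℕ → ℝ)
    (hp0 : ∀ k : ℕ, 1 ≤ k → 0 ≤ p k)
    (hmono : ∀ k : ℕ, 1 ≤ k → p (k + 1) ≤ p k)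
    (θ : ℝ) (hθ0 : 0 < θ)
    (hbdd : IsBoundedUnder (· ≤ ·) atTop
      (fun n : ℕ => (n : ℝ) ^ (-θ) * ∑ k ∈ Finset.Icc 1 n, p k)) :
    (∀ y : ℝ, 1 < y →
      (y ^ θ * liminf (fun n : ℕ => (n : ℝ) ^ (-θ) * ∑ k ∈ Finset.Icc 1 n, p k) atTop
          - limsup (fun n : ℕ => (n : ℝ) ^ (-θ) * ∑ k ∈ Finset.Icc 1 n, p k) atTop)
          / (y - 1)
        ≤ liminf (fun n : ℕ => (n : ℝ) ^ (1 - θ) * p n) atTop) ∧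
    (∀ x : ℝ, 0 < x → x < 1 →
      limsup (fun n : ℕ => (n : ℝ) ^ (1 - θ) * p n) atTop
        ≤ (limsup (fun n : ℕ => (n : ℝ) ^ (-θ) * ∑ k ∈ Finset.Icc 1 n, p k) atTop
          - x ^ θ * liminf (fun n : ℕ => (n : ℝ) ^ (-θ) * ∑ k ∈ Finset.Icc 1 n, p k) atTop)
          / (1 - x)) ∧
    (0 < liminf (fun n : ℕ => (n : ℝ) ^ (-θ) * ∑ k ∈ Finset.Icc 1 n, p k) atTop →
      0 < liminf (fun n : ℕ => (n : ℝ) ^ (1 - θ) * p n) atTop ∧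
      liminf (fun n : ℕ => (n : ℝ) ^ (1 - θ) * p n) atTop
        ≤ limsup (fun n : ℕ => (n : ℝ) ^ (1 - θ) * p n) atTop ∧
      IsBoundedUnder (· ≤ ·) atTop (fun n : ℕ => (n : ℝ) ^ (1 - θ) * p n)) := by
  have hp : AntitoneOn p (Set.Ici 1) := antitoneOn_nat_Ici_of_succ_le hmono
  have hterm_le := isBoundedUnder_le_rescaledTerm hp0 hp hθ0 hbdd
  refine ⟨fun y hy => div_le_liminf_rescaledTerm hp0 hp hθ0 hbdd hy,
    fun x hx0 hx1 => limsup_rescaledTerm_le_div hp0 hp hθ0 hbdd hx0 hx1, fun hpos => ?_⟩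
  exact ⟨liminf_rescaledTerm_pos hp0 hp hθ0 hbdd hpos,
    liminf_le_limsup hterm_le (isBoundedUnder_ge_rescaledTerm hp0), hterm_le⟩

/-- Two-sided Tauberian bounds for nonincreasing sequences in `[0,1]`: with
`C₋ = liminf n^{−θ} ∑_{k≤n} p k` and `C₊ = limsup n^{−θ} ∑_{k≤n} p k` (assumed finite,
i.e. the normalized sums are bounded above), one has, for every `y > 1`,
`liminf n^{1−θ} p n ≥ (y^θ C₋ − C₊)/(y − 1)`, for every `x ∈ (0,1)`,
`limsup n^{1−θ} p n ≤ (C₊ − x^θ C₋)/(1 − x)`, and, in particular, if `C₋ > 0` then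
`0 < liminf n^{1−θ} p n ≤ limsup n^{1−θ} p n < ∞`. -/
theorem tauberian_two_sided (p : ℕ → ℝ)
    (hp0 : ∀ k : ℕ, 1 ≤ k → 0 ≤ p k) (hp1 : ∀ k : ℕ, 1 ≤ k → p k ≤ 1)
    (hmono : ∀ k : ℕ, 1 ≤ k → p (k + 1) ≤ p k)
    (θ : ℝ) (hθ0 : 0 < θ) (hθ1 : θ ≤ 1)
    (hbdd : IsBoundedUnder (· ≤ ·) atTop
      (fun n : ℕ => (n : ℝ) ^ (-θ) * ∑ k ∈ Finset.Icc 1 n, p k)) :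
    (∀ y : ℝ, 1 < y →
      (y ^ θ * liminf (fun n : ℕ => (n : ℝ) ^ (-θ) * ∑ k ∈ Finset.Icc 1 n, p k) atTop
          - limsup (fun n : ℕ => (n : ℝ) ^ (-θ) * ∑ k ∈ Finset.Icc 1 n, p k) atTop)
          / (y - 1)
        ≤ liminf (fun n : ℕ => (n : ℝ) ^ (1 - θ) * p n) atTop) ∧
    (∀ x : ℝ, 0 < x → x < 1 →
      limsup (fun n : ℕ => (n : ℝ) ^ (1 - θ) * p n) atTop
        ≤ (limsup (fun n : ℕ => (n : ℝ) ^ (-θ) * ∑ k ∈ Finset.Icc 1 n, p k) atTop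
          - x ^ θ * liminf (fun n : ℕ => (n : ℝ) ^ (-θ) * ∑ k ∈ Finset.Icc 1 n, p k) atTop)
          / (1 - x)) ∧
    (0 < liminf (fun n : ℕ => (n : ℝ) ^ (-θ) * ∑ k ∈ Finset.Icc 1 n, p k) atTop →
      0 < liminf (fun n : ℕ => (n : ℝ) ^ (1 - θ) * p n) atTop ∧
      liminf (fun n : ℕ => (n : ℝ) ^ (1 - θ) * p n) atTop
        ≤ limsup (fun n : ℕ => (n : ℝ) ^ (1 - θ) * p n) atTop ∧
      IsBoundedUnder (· ≤ ·) atTop (fun n : ℕ => (n : ℝ) ^ (1 - θ) * p n)) :=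
  tauberian_two_sided_general p hp0 hmono θ hθ0 hbdd
end

section
/- Let (Ω, μ, T) be an ergodic measure-preserving dynamical system on a probability space, and let f : Ω → ℤ be measurable. Define Z_0 := 0 and Z_n(ω) := Σ_{k=0}^{n−1} f(T^k ω) for n ≥ 1, and let R_n(ω) := #{Z_0(ω), Z_1(ω), …, Z_n(ω)}. Then for μ-almost every ω, R_n(ω)/n converges as n → ∞ to μ({ω : Z_j(ω) ≠ 0 for all j ≥ 1}). -/
/-!
Count the values `Z_0(ω), …, Z_n(ω)` by their last visits. A time `k` is a last visit for all
future times exactly when `T^k ω` lies in the escape set `A = {ω | Z_j(ω) ≠ 0 for all j ≥ 1}`,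
and a last visit `k < n - M` before time `n` forces `T^k ω ∈ A_M = {ω | Z_j(ω) ≠ 0, 1 ≤ j ≤ M}`.
Hence `#{k < n | T^k ω ∈ A} ≤ R_n ≤ #{k < n | T^k ω ∈ A_M} + M + 1`, and the pointwise ergodic
theorem for the indicators of `A` and `A_M`, together with `μ(A_M) ↓ μ(A)`, squeezes `R_n / n`.

The ergodic theorem is proved for `[0, 1]`-valued functions `g`. The limsup of the Birkhoff
averages is invariant, hence a.e. equal to a constant `c`. For `a < c`, almost every orbit
can be cut greedily into stretches of length at most `N` on which `g` averages at least `a`, up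
to the times spent in the small set where no such stretch starts; integrating gives `a ≤ ∫ g`.
Applied to `1 - g`, the same bound controls the liminf.
-/

open MeasureTheory Filter Topology
open scoped Finset

theorem Filter.limsup_add_of_tendsto_zero {ι : Type*} {l : Filter ι} [l.NeBot] {u v : ι → ℝ}
    (hu : IsBoundedUnder (· ≤ ·) l u) (hu' : IsBoundedUnder (· ≥ ·) l u)
    (hv : Tendsto v l (𝓝 0)) :
    limsup (u + v) l = limsup u l := by
  apply le_antisymm
  · calc limsup (u + v) l ≤ limsup u l + limsup v l :=
          limsup_add_le hu' hu hv.isBoundedUnder_ge.isCoboundedUnder_le hv.isBoundedUnder_le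
      _ = limsup u l := by rw [hv.limsup_eq, add_zero]
  · calc limsup u l = limsup u l + liminf v l := by rw [hv.liminf_eq, add_zero]
      _ ≤ limsup (u + v) l :=
          le_limsup_add hu hu'.isCoboundedUnder_le hv.isBoundedUnder_le hv.isBoundedUnder_ge

theorem tendsto_of_squeeze_upper_family {α ι β : Type*} [TopologicalSpace β]
    [LinearOrder β] [OrderTopology β] {l : Filter α} {m : Filter ι} [m.NeBot]
    {u lower : α → β} {upper : ι → α → β} {c : β} {cs : ι → β}
    (h_lower : Tendsto lower l (𝓝 c)) (h_upper : ∀ i, Tendsto (upper i) l (𝓝 (cs i)))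
    (hcs : Tendsto cs m (𝓝 c)) (hlu : lower ≤ᶠ[l] u) (hul : ∀ i, u ≤ᶠ[l] upper i) :
    Tendsto u l (𝓝 c) := by
  refine tendsto_order.2 ⟨fun a ha => ?_, fun a ha => ?_⟩
  · filter_upwards [h_lower.eventually (eventually_gt_nhds ha), hlu] with x h1 h2
    exact h1.trans_le h2
  · obtain ⟨i, hi⟩ := (hcs.eventually (eventually_lt_nhds ha)).exists
    filter_upwards [(h_upper i).eventually (eventually_lt_nhds hi), hul i] with x h1 h2
    exact h2.trans_lt h1

section BirkhoffSum

variable {Ω : Type*} {T : Ω → Ω} {g : Ω → ℝ}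

theorem birkhoffSum_nonneg (hg : 0 ≤ g) (n : ℕ) (x : Ω) : 0 ≤ birkhoffSum T g n x :=
  Finset.sum_nonneg fun _ _ => hg _

theorem birkhoffAverage_mem_Icc (hg₀ : 0 ≤ g) (hg₁ : g ≤ 1) (n : ℕ) (x : Ω) :
    birkhoffAverage ℝ T g n x ∈ Set.Icc 0 1 := by
  have hle : birkhoffSum T g n x ≤ n :=
    (Finset.sum_le_sum fun i _ => hg₁ (T^[i] x)).trans_eq (by simp)
  rw [birkhoffAverage, smul_eq_mul]
  exact ⟨mul_nonneg (inv_nonneg.2 n.cast_nonneg) (birkhoffSum_nonneg hg₀ n x),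
    inv_mul_le_one_of_le₀ hle n.cast_nonneg⟩

theorem birkhoffAverage_indicator_one (s : Set Ω) [DecidablePred (· ∈ s)] (n : ℕ) (x : Ω) :
    birkhoffAverage ℝ T (s.indicator 1) n x = (#{k ∈ Finset.range n | T^[k] x ∈ s} : ℝ) / n := by
  simp [birkhoffAverage, birkhoffSum, Set.indicator_apply, Finset.sum_boole, div_eq_inv_mul]

theorem limsup_birkhoffAverage_apply (hg₀ : 0 ≤ g) (hg₁ : g ≤ 1) (x : Ω) :
    limsup (birkhoffAverage ℝ T g · (T x)) atTop = limsup (birkhoffAverage ℝ T g · x) atTop := by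
  have hbdd : Bornology.IsBounded (Set.range g) :=
    (Metric.isBounded_Icc (0 : ℝ) 1).subset (Set.range_subset_iff.2 fun y => ⟨hg₀ y, hg₁ y⟩)
  have hIcc (n : ℕ) := birkhoffAverage_mem_Icc hg₀ hg₁ (T := T) n x
  have := Filter.limsup_add_of_tendsto_zero (isBoundedUnder_of ⟨1, fun n => (hIcc n).2⟩)
    (isBoundedUnder_of ⟨0, fun n => (hIcc n).1⟩)
    (tendsto_birkhoffAverage_apply_sub_birkhoffAverage' ℝ hbdd T x)
  simpa only [Pi.add_def, add_sub_cancel] using this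

/-- Greedy covering of an orbit segment: from a point of `E` jump ahead by a time `n ≤ N` at
which `g` averages at least `a`, from a point outside `E` by one step. Only the steps taken
outside `E` and the last `N` steps are lost. -/
theorem mul_sub_le_birkhoffSum (hg : 0 ≤ g) {a : ℝ} (ha : 0 ≤ a) {N : ℕ} {E : Set Ω}
    (hE : ∀ x ∈ E, ∃ n ∈ Finset.Icc 1 N, a * n ≤ birkhoffSum T g n x) (L : ℕ) (x : Ω) :
    a * (L - N - birkhoffSum T (Eᶜ.indicator 1) L x) ≤ birkhoffSum T g L x := by
  have he : (0 : Ω → ℝ) ≤ Eᶜ.indicator 1 := Set.indicator_nonneg fun _ _ => zero_le_one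
  induction L using Nat.strong_induction_on generalizing x with
  | _ L ih =>
  by_cases hLN : L ≤ N
  · have : (L : ℝ) ≤ N := by exact_mod_cast hLN
    nlinarith [birkhoffSum_nonneg hg L x (T := T), birkhoffSum_nonneg he L x (T := T)]
  obtain ⟨n, hn, hnL, hstep⟩ : ∃ n, 1 ≤ n ∧ n ≤ L ∧
      a * n ≤ birkhoffSum T g n x + a * birkhoffSum T (Eᶜ.indicator 1) n x := by
    by_cases hx : x ∈ E
    · obtain ⟨n, hn, hgn⟩ := hE x hx
      rw [Finset.mem_Icc] at hn
      refine ⟨n, hn.1, by omega, ?_⟩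
      nlinarith [birkhoffSum_nonneg he n x (T := T)]
    · refine ⟨1, le_rfl, by omega, ?_⟩
      simpa [birkhoffSum_one, hx] using hg x
  have := ih (L - n) (by omega) (T^[n] x)
  obtain ⟨L, rfl⟩ := Nat.exists_eq_add_of_le hnL
  rw [Nat.add_sub_cancel_left] at this
  rw [birkhoffSum_add, birkhoffSum_add]
  push_cast
  linarith

end BirkhoffSum

section Ergodic

variable {Ω : Type*} [MeasurableSpace Ω] {μ : Measure Ω} {T : Ω → Ω} {g : Ω → ℝ}

theorem measurable_birkhoffSum {M : Type*} [AddCommMonoid M] [MeasurableSpace M]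
    [MeasurableAdd₂ M] (hT : Measurable T) {g : Ω → M} (hg : Measurable g) (n : ℕ) :
    Measurable (birkhoffSum T g n) :=
  Finset.measurable_sum _ fun i _ => hg.comp (hT.iterate i)

theorem measurable_birkhoffAverage (hT : Measurable T) (hg : Measurable g) (n : ℕ) :
    Measurable (birkhoffAverage ℝ T g n) :=
  (measurable_birkhoffSum hT hg n).const_smul ((n : ℝ)⁻¹)

theorem integrable_of_nonneg_of_le_one [IsFiniteMeasure μ] (hgm : Measurable g) (hg₀ : 0 ≤ g)
    (hg₁ : g ≤ 1) : Integrable g μ :=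
  .of_bound hgm.aestronglyMeasurable 1 <| ae_of_all _ fun x => by
    rw [Real.norm_of_nonneg (hg₀ x)]; exact hg₁ x

theorem MeasureTheory.MeasurePreserving.integrable_birkhoffSum (hT : MeasurePreserving T μ μ)
    (hg : Integrable g μ) (n : ℕ) : Integrable (birkhoffSum T g n) μ :=
  integrable_finsetSum _ fun i _ => (hT.iterate i).integrable_comp_of_integrable hg

theorem MeasureTheory.MeasurePreserving.integral_birkhoffSum (hT : MeasurePreserving T μ μ)
    (hg : Integrable g μ) (n : ℕ) : ∫ x, birkhoffSum T g n x ∂μ = n * ∫ x, g x ∂μ := by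
  have hcomp (i : ℕ) : ∫ x, g (T^[i] x) ∂μ = ∫ x, g x ∂μ := by
    rw [← integral_map (hT.iterate i).measurable.aemeasurable (by
      rw [(hT.iterate i).map_eq]; exact hg.aestronglyMeasurable), (hT.iterate i).map_eq]
  simp only [birkhoffSum]
  rw [integral_finsetSum (f := fun i x => g (T^[i] x)) _ fun i _ =>
    (hT.iterate i).integrable_comp_of_integrable hg]
  simp [hcomp]

theorem MeasureTheory.MeasurePreserving.mul_one_sub_measureReal_le_integral [IsProbabilityMeasure μ]
    (hT : MeasurePreserving T μ μ) (hg : 0 ≤ g) (hgi : Integrable g μ) {a : ℝ} (ha : 0 ≤ a)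
    {N : ℕ} {E : Set Ω} (hEm : MeasurableSet E)
    (hE : ∀ x ∈ E, ∃ n ∈ Finset.Icc 1 N, a * n ≤ birkhoffSum T g n x) :
    a * (1 - μ.real Eᶜ) ≤ ∫ x, g x ∂μ := by
  have hind : Integrable (Eᶜ.indicator (1 : Ω → ℝ)) μ :=
    (integrable_const 1).indicator hEm.compl
  have hbound (L : ℕ) : a * (L - N - L * μ.real Eᶜ) ≤ L * ∫ x, g x ∂μ := by
    have := integral_mono
      (((integrable_const _).sub (hT.integrable_birkhoffSum hind L)).const_mul a)
      (hT.integrable_birkhoffSum hgi L) (mul_sub_le_birkhoffSum hg ha hE L)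
    simp only [Pi.sub_apply] at this
    rwa [integral_const_mul, integral_sub (integrable_const _) (hT.integrable_birkhoffSum hind L),
      hT.integral_birkhoffSum hind, hT.integral_birkhoffSum hgi, integral_indicator_one hEm.compl,
      integral_const, probReal_univ, one_smul] at this
  have hlim : Tendsto (fun L : ℕ => a * (1 - μ.real Eᶜ) - a * N / L) atTop
      (𝓝 (a * (1 - μ.real Eᶜ) - 0)) :=
    tendsto_const_nhds.sub (tendsto_const_div_atTop_nhds_zero_nat _)
  rw [sub_zero] at hlim
  refine le_of_tendsto hlim ((eventually_gt_atTop 0).mono fun L hL => ?_)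
  have hL' : (0 : ℝ) < L := by exact_mod_cast hL
  rw [← mul_le_mul_iff_right₀ hL']
  calc L * (a * (1 - μ.real Eᶜ) - a * N / L) = a * (L - N - L * μ.real Eᶜ) := by
        field_simp; ring
    _ ≤ L * ∫ x, g x ∂μ := hbound L

theorem MeasureTheory.MeasurePreserving.le_integral_of_ae_exists_birkhoffSum_ge
    [IsProbabilityMeasure μ] (hT : MeasurePreserving T μ μ) (hgm : Measurable g) (hg : 0 ≤ g)
    (hgi : Integrable g μ) {a : ℝ} (h : ∀ᵐ x ∂μ, ∃ n, 0 < n ∧ a * n ≤ birkhoffSum T g n x) :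
    a ≤ ∫ x, g x ∂μ := by
  rcases le_or_gt a 0 with ha | ha
  · exact ha.trans (integral_nonneg hg)
  set E : ℕ → Set Ω := fun N => {x | ∃ n ∈ Finset.Icc 1 N, a * n ≤ birkhoffSum T g n x}
  have hEm (N : ℕ) : MeasurableSet (E N) := by
    have := measurable_birkhoffSum hT.measurable hgm
    measurability
  have hEc : Tendsto (fun N => μ.real (E N)ᶜ) atTop (𝓝 0) := by
    have hanti : Antitone fun N => (E N)ᶜ := fun N M hNM => Set.compl_subset_compl.2
      fun x ⟨n, hn, hx⟩ => ⟨n, Finset.Icc_subset_Icc_right hNM hn, hx⟩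
    have hnull : μ (⋂ N, (E N)ᶜ) = 0 := by
      refine measure_mono_null (fun x hx => ?_) (ae_iff.1 h)
      rintro ⟨n, hn, hx'⟩
      exact Set.mem_iInter.1 hx n ⟨n, Finset.mem_Icc.2 ⟨hn, le_rfl⟩, hx'⟩
    have := tendsto_measure_iInter_atTop (fun N => (hEm N).compl.nullMeasurableSet) hanti
      ⟨0, measure_ne_top μ _⟩
    rw [hnull] at this
    exact (ENNReal.tendsto_toReal ENNReal.zero_ne_top).comp this
  have hlim : Tendsto (fun N => a * (1 - μ.real (E N)ᶜ)) atTop (𝓝 (a * (1 - 0))) :=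
    tendsto_const_nhds.mul (tendsto_const_nhds.sub hEc)
  rw [sub_zero, mul_one] at hlim
  exact le_of_tendsto' hlim fun N =>
    hT.mul_one_sub_measureReal_le_integral hg hgi ha.le (hEm N) fun x hx => hx

theorem Ergodic.ae_limsup_birkhoffAverage_le [IsProbabilityMeasure μ] (hT : Ergodic T μ)
    (hgm : Measurable g) (hg₀ : 0 ≤ g) (hg₁ : g ≤ 1) :
    ∀ᵐ x ∂μ, limsup (birkhoffAverage ℝ T g · x) atTop ≤ ∫ x, g x ∂μ := by
  have hgi : Integrable g μ := integrable_of_nonneg_of_le_one hgm hg₀ hg₁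
  obtain ⟨c, hc⟩ := hT.toPreErgodic.ae_eq_const_of_ae_eq_comp
    (Measurable.limsup fun n => measurable_birkhoffAverage hT.measurable hgm n)
    (funext (limsup_birkhoffAverage_apply hg₀ hg₁))
  suffices c ≤ ∫ x, g x ∂μ from hc.mono fun x hx => hx.trans_le this
  refine le_of_forall_lt_imp_le_of_dense fun a ha =>
    hT.toMeasurePreserving.le_integral_of_ae_exists_birkhoffSum_ge hgm hg₀ hgi ?_
  filter_upwards [hc] with x hx
  have hIcc (n : ℕ) := birkhoffAverage_mem_Icc hg₀ hg₁ (T := T) n x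
  obtain ⟨n, han, hn⟩ := ((frequently_lt_of_lt_limsup
    (isCoboundedUnder_le_of_le atTop fun n => (hIcc n).1) (hx ▸ ha : a < _)).and_eventually
    (eventually_gt_atTop 0)).exists
  refine ⟨n, hn, ?_⟩
  rw [birkhoffAverage, smul_eq_mul, lt_inv_mul_iff₀ (by exact_mod_cast hn)] at han
  linarith

theorem Ergodic.ae_tendsto_birkhoffAverage [IsProbabilityMeasure μ] (hT : Ergodic T μ)
    (hgm : Measurable g) (hg₀ : 0 ≤ g) (hg₁ : g ≤ 1) :
    ∀ᵐ x ∂μ, Tendsto (birkhoffAverage ℝ T g · x) atTop (𝓝 (∫ x, g x ∂μ)) := by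
  have hgi : Integrable g μ := integrable_of_nonneg_of_le_one hgm hg₀ hg₁
  have hg₀' : 0 ≤ 1 - g := sub_nonneg.2 hg₁
  have hg₁' : 1 - g ≤ 1 := sub_le_self 1 hg₀
  filter_upwards [hT.ae_limsup_birkhoffAverage_le hgm hg₀ hg₁,
    hT.ae_limsup_birkhoffAverage_le (g := 1 - g) (measurable_const.sub hgm) hg₀' hg₁']
    with x hup hlow
  refine tendsto_order.2 ⟨fun a ha => ?_, fun a ha =>
    eventually_lt_of_limsup_lt (hup.trans_lt ha)
      (isBoundedUnder_of ⟨1, fun n => (birkhoffAverage_mem_Icc hg₀ hg₁ n x).2⟩)⟩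
  have hint : ∫ x, (1 - g) x ∂μ = 1 - ∫ x, g x ∂μ := by
    simp [integral_sub (integrable_const 1) hgi]
  rw [hint] at hlow
  filter_upwards [eventually_lt_of_limsup_lt (hlow.trans_lt (sub_lt_sub_left ha 1))
    (isBoundedUnder_of ⟨1, fun n => (birkhoffAverage_mem_Icc hg₀' hg₁' n x).2⟩),
    eventually_ne_atTop 0] with n hn hn0
  have hconst : birkhoffAverage ℝ T (1 : Ω → ℝ) n = 1 :=
    birkhoffAverage_of_comp_eq ℝ rfl (Nat.cast_ne_zero.2 hn0)
  rw [birkhoffAverage_sub, Pi.sub_apply, Pi.sub_apply, hconst, Pi.one_apply] at hn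
  linarith

theorem Ergodic.ae_tendsto_birkhoffAverage_indicator [IsProbabilityMeasure μ] (hT : Ergodic T μ)
    {s : Set Ω} (hs : MeasurableSet s) :
    ∀ᵐ x ∂μ, Tendsto (birkhoffAverage ℝ T (s.indicator 1) · x) atTop (𝓝 (μ.real s)) := by
  simpa [integral_indicator_one hs] using hT.ae_tendsto_birkhoffAverage (g := s.indicator 1)
    (measurable_const.indicator hs) (Set.indicator_nonneg fun _ _ => zero_le_one)
    (Set.indicator_le_self' fun _ _ => zero_le_one)

end Ergodic

theorem Finset.card_image_le_card_filter_forall_gt_ne {α β : Type*} [LinearOrder α]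
    [DecidableEq β] (s : Finset α) (g : α → β) :
    #(s.image g) ≤ #{k ∈ s | ∀ j ∈ s, k < j → g j ≠ g k} := by
  refine card_le_card_of_surjOn g fun v hv => ?_
  obtain ⟨m, hm, rfl⟩ := mem_image.1 hv
  have hne : ({j ∈ s | g j = g m} : Finset α).Nonempty := ⟨m, mem_filter.2 ⟨hm, rfl⟩⟩
  obtain ⟨hks, hkm⟩ := mem_filter.1 (max'_mem _ hne)
  refine ⟨_, mem_filter.2 ⟨hks, fun j hj hkj hjk => ?_⟩, hkm⟩
  exact hkj.not_ge (le_max' _ j (mem_filter.2 ⟨hj, hjk.trans hkm⟩))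

section Escape

variable {Ω G : Type*} [AddCommGroup G] (T : Ω → Ω) (f : Ω → G)

def escapeSet : Set Ω := {ω | ∀ j, 1 ≤ j → birkhoffSum T f j ω ≠ 0}

def escapeSetUpTo (M : ℕ) : Set Ω := {ω | ∀ j, 1 ≤ j → j ≤ M → birkhoffSum T f j ω ≠ 0}

variable {T f}

theorem birkhoffSum_add_eq_self_iff {k j : ℕ} {ω : Ω} :
    birkhoffSum T f (k + j) ω = birkhoffSum T f k ω ↔ birkhoffSum T f j (T^[k] ω) = 0 := by
  rw [birkhoffSum_add, add_eq_left]

theorem card_filter_escapeSet_le_card_image [DecidableEq G] [DecidablePred (· ∈ escapeSet T f)]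
    (n : ℕ) (ω : Ω) :
    #{k ∈ Finset.range n | T^[k] ω ∈ escapeSet T f} ≤
      #((Finset.range (n + 1)).image (birkhoffSum T f · ω)) := by
  refine Finset.card_le_card_of_injOn (birkhoffSum T f · ω)
    (fun k hk => Finset.mem_image_of_mem _ ?_) ?_
  · simp only [Finset.coe_filter, Set.mem_ofPred_eq, Finset.mem_range] at hk
    exact Finset.mem_range.2 (by omega)
  intro k hk l hl hkl
  by_contra hne
  wlog hlt : k < l generalizing k l
  · exact this hl hk hkl.symm (Ne.symm hne) (by omega)
  obtain ⟨j, rfl⟩ := Nat.exists_eq_add_of_le hlt.le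
  simp only [Finset.coe_filter, Set.mem_ofPred_eq] at hk
  exact hk.2 j (by omega) (birkhoffSum_add_eq_self_iff.1 hkl.symm)

theorem card_image_le_card_filter_escapeSetUpTo_add [DecidableEq G] (M : ℕ)
    [DecidablePred (· ∈ escapeSetUpTo T f M)] (n : ℕ) (ω : Ω) :
    #((Finset.range (n + 1)).image (birkhoffSum T f · ω)) ≤
      #{k ∈ Finset.range n | T^[k] ω ∈ escapeSetUpTo T f M} + (M + 1) := by
  set good := ({k ∈ Finset.range n | T^[k] ω ∈ escapeSetUpTo T f M} : Finset ℕ)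
  have hsub : {k ∈ Finset.range (n + 1) | ∀ j ∈ Finset.range (n + 1), k < j →
      birkhoffSum T f j ω ≠ birkhoffSum T f k ω} ⊆ good ∪ Finset.Icc (n - M) n := by
    intro k hk
    simp only [Finset.mem_filter, Finset.mem_range] at hk
    rw [Finset.mem_union, Finset.mem_Icc]
    by_cases hkM : n - M ≤ k
    · exact Or.inr ⟨hkM, by omega⟩
    refine Or.inl (Finset.mem_filter.2 ⟨Finset.mem_range.2 (by omega), fun j hj hjM h0 => ?_⟩)
    exact hk.2 (k + j) (by omega) (by omega) (birkhoffSum_add_eq_self_iff.2 h0)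
  calc _ ≤ _ := Finset.card_image_le_card_filter_forall_gt_ne _ _
    _ ≤ #(good ∪ Finset.Icc (n - M) n) := Finset.card_le_card hsub
    _ ≤ #good + #(Finset.Icc (n - M) n) := Finset.card_union_le _ _
    _ ≤ #good + (M + 1) := by rw [Nat.card_Icc]; omega

variable [MeasurableSpace Ω] [MeasurableSpace G] [MeasurableSingletonClass G] [MeasurableAdd₂ G]

theorem measurableSet_escapeSet (hT : Measurable T) (hf : Measurable f) :
    MeasurableSet (escapeSet T f) := by
  have := measurable_birkhoffSum hT hf
  unfold escapeSet
  measurability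

theorem measurableSet_escapeSetUpTo (hT : Measurable T) (hf : Measurable f) (M : ℕ) :
    MeasurableSet (escapeSetUpTo T f M) := by
  have := measurable_birkhoffSum hT hf
  unfold escapeSetUpTo
  measurability

theorem tendsto_measureReal_escapeSetUpTo {μ : Measure Ω} [IsFiniteMeasure μ] (hT : Measurable T)
    (hf : Measurable f) :
    Tendsto (fun M => μ.real (escapeSetUpTo T f M)) atTop (𝓝 (μ.real (escapeSet T f))) := by
  have hanti : Antitone (escapeSetUpTo T f) := fun _ _ hMM' _ hω j hj hjM =>
    hω j hj (hjM.trans hMM')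
  have hinter : ⋂ M, escapeSetUpTo T f M = escapeSet T f := by
    ext ω
    simp only [Set.mem_iInter, escapeSetUpTo, escapeSet, Set.mem_ofPred_eq]
    exact ⟨fun h j hj => h j j hj le_rfl, fun h M j hj _ => h j hj⟩
  have := tendsto_measure_iInter_atTop
    (fun M => (measurableSet_escapeSetUpTo hT hf M).nullMeasurableSet) hanti
    ⟨0, measure_ne_top μ _⟩
  rw [hinter] at this
  exact (ENNReal.tendsto_toReal (measure_ne_top μ _)).comp this

end Escape

/-- Range theorem for ergodic cocycles (Derriennic's lemma): for the ergodic sums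
`Z n = ∑_{k<n} f ∘ T^k` of a measurable integer-valued function `f` over an ergodic
measure-preserving transformation `T` of a probability space, the proportion of distinct
values `R n / n` converges almost surely to `μ(∀ j ≥ 1, Z j ≠ 0)`. -/
theorem range_of_ergodic_cocycle {Ω : Type*} [MeasurableSpace Ω]
    (μ : Measure Ω) [IsProbabilityMeasure μ]
    (T : Ω → Ω) (hT : Ergodic T μ) (f : Ω → ℤ) (hf : Measurable f) :
    ∀ᵐ ω ∂μ, Tendsto
      (fun n : ℕ =>
        ((((Finset.range (n + 1)).image
          (fun k => ∑ i ∈ Finset.range k, f (T^[i] ω))).card : ℝ)) / (n : ℝ))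
      atTop
      (nhds ((μ {ω | ∀ j : ℕ, 1 ≤ j →
        ∑ i ∈ Finset.range j, f (T^[i] ω) ≠ 0}).toReal)) := by
  classical
  filter_upwards
    [hT.ae_tendsto_birkhoffAverage_indicator (measurableSet_escapeSet hT.measurable hf),
    ae_all_iff.2 fun M => hT.ae_tendsto_birkhoffAverage_indicator
      (measurableSet_escapeSetUpTo hT.measurable hf M)] with ω hlow hup
  refine tendsto_of_squeeze_upper_family hlow
    (fun M => (hup M).add (tendsto_const_div_atTop_nhds_zero_nat ((M : ℝ) + 1)))
    ((tendsto_measureReal_escapeSetUpTo hT.measurable hf).congr fun _ => (add_zero _).symm)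
    (Eventually.of_forall fun n => ?_) (fun M => Eventually.of_forall fun n => ?_)
  · dsimp only
    rw [birkhoffAverage_indicator_one]
    gcongr
    exact_mod_cast card_filter_escapeSet_le_card_image n ω
  · dsimp only
    rw [birkhoffAverage_indicator_one, ← add_div]
    gcongr
    exact_mod_cast card_image_le_card_filter_escapeSetUpTo_add M n ω
end

section
/- Let (Z_n)_{n≥0} be a sequence of integer-valued random variables with Z_0 = 0 such that for every k ≥ 1 the random vector (Z_k − Z_{k−1}, Z_k − Z_{k−2}, …, Z_k − Z_0) has the same distribution as (Z_1, Z_2, …, Z_k). Let R_n := #{Z_0, Z_1, …, Z_n} and T_0 := inf{n ≥ 1 : Z_n = 0}. Suppose there exist θ ∈ (0,1] and L > 0 such that lim_{n→∞} E[R_n]/n^θ = L. Then lim_{n→∞} n^{1−θ} P(T_0 > n) = θ L. -/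
/-!
Reversing the increments of `Z` up to time `k` turns the event "`Z k` is a site not visited
before" into "`Z` does not return to `0` during `[1, k]`", so the two have the same probability
and `E[R n] = ∑_{k ≤ n} P(T₀ > k)`. The tail `a k = P(T₀ > k)` is nonincreasing, so for `c ≠ 1`
the average of `a` over the block between `n` and `⌊c n⌋` lies on one side of `a n`, while the
asymptotics of the partial sums give `n^(1-θ)` times that average the limit
`L (c^θ - 1) / (c - 1)`. Letting `c → 1` from both sides, this tends to the derivative `θ L`.
-/

open MeasureTheory Filter Finset Topology

theorem tendsto_natFloor_mul_natCast_div {c : ℝ} (hc : 0 ≤ c) :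
    Tendsto (fun n : ℕ => (⌊c * n⌋₊ : ℝ) / n) atTop (𝓝 c) :=
  (tendsto_nat_floor_mul_div_atTop hc).comp tendsto_natCast_atTop_atTop

theorem tendsto_div_rpow_of_tendsto_succ_div_rpow {f : ℕ → ℝ} {θ L : ℝ}
    (hf : Tendsto (fun n : ℕ => f (n + 1) / (n : ℝ) ^ θ) atTop (𝓝 L)) :
    Tendsto (fun n : ℕ => f n / (n : ℝ) ^ θ) atTop (𝓝 L) := by
  rw [← tendsto_add_atTop_iff_nat 1]
  have hratio : Tendsto (fun n : ℕ => ((n : ℝ) / (n + 1)) ^ θ) atTop (𝓝 1) := by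
    simpa using (tendsto_natCast_div_add_atTop (1 : ℝ)).rpow_const (Or.inl one_ne_zero)
  refine (mul_one L ▸ hf.mul hratio).congr' ?_
  filter_upwards [eventually_ge_atTop 1] with n hn
  have hn0 : (0 : ℝ) < n := by exact_mod_cast hn
  have := (Real.rpow_pos_of_pos hn0 θ).ne'
  rw [Real.div_rpow hn0.le (by positivity)]
  push_cast
  field_simp

theorem Antitone.sum_range_sub_div_le {a : ℕ → ℝ} (ha : Antitone a) {m n : ℕ} (h : n < m) :
    (∑ k ∈ range m, a k - ∑ k ∈ range n, a k) / ((m : ℝ) - n) ≤ a n := by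
  rw [div_le_iff₀ (by simpa using h), ← sum_Ico_eq_sub _ h.le, ← Nat.cast_sub h.le,
    ← Nat.card_Ico, mul_comm, ← nsmul_eq_mul]
  exact sum_le_card_nsmul _ _ _ fun k hk => ha (mem_Ico.1 hk).1

theorem Antitone.le_sum_range_sub_div {a : ℕ → ℝ} (ha : Antitone a) {m n : ℕ} (h : m < n) :
    a n ≤ (∑ k ∈ range m, a k - ∑ k ∈ range n, a k) / ((m : ℝ) - n) := by
  rw [← neg_div_neg_eq, neg_sub, neg_sub, le_div_iff₀ (by simpa using h),
    ← sum_Ico_eq_sub _ h.le, ← Nat.cast_sub h.le, ← Nat.card_Ico, mul_comm, ← nsmul_eq_mul]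
  exact card_nsmul_le_sum _ _ _ fun k hk => ha (mem_Ico.1 hk).2.le

theorem tendsto_rpow_one_sub_mul_div_floor_mul {f : ℕ → ℝ} {θ L c : ℝ}
    (hf : Tendsto (fun n : ℕ => f n / (n : ℝ) ^ θ) atTop (𝓝 L)) (hc : 0 < c) (hc1 : c ≠ 1) :
    Tendsto (fun n : ℕ => (n : ℝ) ^ (1 - θ) * ((f ⌊c * n⌋₊ - f n) / ((⌊c * n⌋₊ : ℝ) - n)))
      atTop (𝓝 (L * ((c ^ θ - 1) / (c - 1)))) := by
  set m : ℕ → ℕ := fun n => ⌊c * n⌋₊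
  have hm : Tendsto m atTop atTop :=
    tendsto_nat_floor_atTop.comp (tendsto_natCast_atTop_atTop.const_mul_atTop hc)
  have hratio : Tendsto (fun n : ℕ => (m n : ℝ) / n) atTop (𝓝 c) :=
    tendsto_natFloor_mul_natCast_div hc.le
  have hlim : Tendsto (fun n : ℕ => (f (m n) / (m n : ℝ) ^ θ * ((m n : ℝ) / n) ^ θ
      - f n / (n : ℝ) ^ θ) / ((m n : ℝ) / n - 1)) atTop (𝓝 ((L * c ^ θ - L) / (c - 1))) :=
    (((hf.comp hm).mul (hratio.rpow_const (Or.inl hc.ne'))).sub hf).div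
      (hratio.sub_const 1) (sub_ne_zero.2 hc1)
  rw [show L * ((c ^ θ - 1) / (c - 1)) = (L * c ^ θ - L) / (c - 1) by ring]
  refine hlim.congr' ?_
  filter_upwards [eventually_ge_atTop 1, hm.eventually_ge_atTop 1,
    hratio.eventually_ne hc1] with n hn hmn hr
  have hn0 : (0 : ℝ) < n := by exact_mod_cast hn
  have hm0 : (0 : ℝ) < m n := by exact_mod_cast hmn
  have hmn : (m n : ℝ) - n ≠ 0 := fun h => hr (by rw [sub_eq_zero.1 h, div_self hn0.ne'])
  rw [Real.div_rpow hm0.le hn0.le, Real.rpow_sub hn0, Real.rpow_one]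
  have := (Real.rpow_pos_of_pos hm0 θ).ne'
  have := (Real.rpow_pos_of_pos hn0 θ).ne'
  simp only [m] at *
  field_simp

theorem tendsto_mul_div_sub_one_rpow_nhdsNE_one (θ L : ℝ) :
    Tendsto (fun c : ℝ => L * ((c ^ θ - 1) / (c - 1))) (𝓝[≠] 1) (𝓝 (θ * L)) := by
  have hslope := hasDerivAt_iff_tendsto_slope.1
    (Real.hasDerivAt_rpow_const (x := 1) (p := θ) (Or.inl one_ne_zero))
  simp only [Real.one_rpow, mul_one] at hslope
  rw [mul_comm θ]
  refine (hslope.const_mul L).congr fun c => ?_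
  rw [slope_def_field, Real.one_rpow]

theorem Antitone.tendsto_rpow_one_sub_mul_of_tendsto_sum_range_div_rpow {a : ℕ → ℝ}
    (ha : Antitone a) {θ L : ℝ}
    (hS : Tendsto (fun n : ℕ => (∑ k ∈ range n, a k) / (n : ℝ) ^ θ) atTop (𝓝 L)) :
    Tendsto (fun n : ℕ => (n : ℝ) ^ (1 - θ) * a n) atTop (𝓝 (θ * L)) := by
  have hg := tendsto_mul_div_sub_one_rpow_nhdsNE_one θ L
  rw [tendsto_order]
  refine ⟨fun b hb => ?_, fun b hb => ?_⟩
  · obtain ⟨c, hbc, hc1⟩ : ∃ c, b < L * ((c ^ θ - 1) / (c - 1)) ∧ 1 < c :=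
      (((hg.mono_left (nhdsGT_le_nhdsNE 1)).eventually (lt_mem_nhds hb)).and
        self_mem_nhdsWithin).exists
    filter_upwards [(tendsto_rpow_one_sub_mul_div_floor_mul hS (by linarith) hc1.ne').eventually
      (lt_mem_nhds hbc), (tendsto_natFloor_mul_natCast_div (c := c) (by linarith)).eventually
      (lt_mem_nhds hc1), eventually_gt_atTop 0] with n hlt hratio hn
    have hn0 : (0 : ℝ) < n := by exact_mod_cast hn
    refine hlt.trans_le (mul_le_mul_of_nonneg_left (ha.sum_range_sub_div_le ?_) (by positivity))
    exact_mod_cast (one_lt_div hn0).1 hratio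
  · obtain ⟨d, hbd, hd⟩ : ∃ d, L * ((d ^ θ - 1) / (d - 1)) < b ∧ d ∈ Set.Ioo 0 1 :=
      (((hg.mono_left (nhdsLT_le_nhdsNE 1)).eventually (gt_mem_nhds hb)).and
        (Ioo_mem_nhdsLT zero_lt_one)).exists
    filter_upwards [(tendsto_rpow_one_sub_mul_div_floor_mul hS hd.1 hd.2.ne).eventually
      (gt_mem_nhds hbd), (tendsto_natFloor_mul_natCast_div hd.1.le).eventually
      (gt_mem_nhds hd.2), eventually_gt_atTop 0] with n hlt hratio hn
    have hn0 : (0 : ℝ) < n := by exact_mod_cast hn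
    refine (mul_le_mul_of_nonneg_left (ha.le_sum_range_sub_div ?_) (by positivity)).trans_lt hlt
    exact_mod_cast (div_lt_one hn0).1 hratio

theorem card_image_range_eq_card_filter {α : Type*} [DecidableEq α] (f : ℕ → α) (n : ℕ) :
    #((range n).image f) = #{k ∈ range n | ∀ j < k, f k ≠ f j} := by
  induction n with
  | zero => simp
  | succ n ih =>
    rw [range_add_one, image_insert, filter_insert]
    by_cases hnew : ∀ j < n, f n ≠ f j
    · rw [if_pos hnew, card_insert_of_notMem, card_insert_of_notMem (by simp), ih]
      simp only [mem_image, mem_range, not_exists, not_and]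
      exact fun j hj hfj => hnew j hj hfj.symm
    · rw [if_neg hnew, insert_eq_self.2, ih]
      obtain ⟨j, hj, hfj⟩ : ∃ j < n, f n = f j := by simpa using hnew
      exact mem_image.2 ⟨j, mem_range.2 hj, hfj.symm⟩

theorem natCast_lt_sInf_iff {p : ℕ → Prop} {n : ℕ} :
    (n : ℕ∞) < sInf {t | ∃ m : ℕ, (m : ℕ∞) = t ∧ p m} ↔ ∀ m ≤ n, ¬ p m := by
  rw [← ENat.add_one_le_iff (ENat.natCast_ne_top n), le_sInf_iff]
  simp only [Set.mem_ofPred_eq, forall_exists_index, and_imp]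
  rw [forall_comm]
  simp only [forall_eq']
  refine forall_congr' fun m => ?_
  norm_cast
  rw [Nat.add_one_le_iff, ← not_le, imp_not_comm]

section Probability

variable {Ω : Type*} [MeasurableSpace Ω] {P : Measure Ω}

theorem integral_card_image_range {α : Type*} [DecidableEq α] [IsFiniteMeasure P]
    {Z : ℕ → Ω → α} (hnew : ∀ k, MeasurableSet {ω | ∀ j < k, Z k ω ≠ Z j ω}) (n : ℕ) :
    ∫ ω, (#((range n).image (Z · ω)) : ℝ) ∂P
      = ∑ k ∈ range n, P.real {ω | ∀ j < k, Z k ω ≠ Z j ω} := by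
  have hcard : ∀ ω, (#((range n).image (Z · ω)) : ℝ)
      = ∑ k ∈ range n, {ω | ∀ j < k, Z k ω ≠ Z j ω}.indicator 1 ω := fun ω => by
    rw [card_image_range_eq_card_filter, card_filter]
    push_cast
    exact sum_congr rfl fun k _ => by simp [Set.indicator_apply]
  simp_rw [hcard]
  rw [integral_finsetSum _ fun k _ => (integrable_const 1).indicator (hnew k)]
  exact sum_congr rfl fun k _ => integral_indicator_one (hnew k)

theorem measure_first_visit_eq_measure_no_return {Z : ℕ → Ω → ℤ} (hZ : ∀ n, Measurable (Z n))
    (hstat : ∀ k : ℕ, 1 ≤ k →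
      Measure.map (fun ω => fun i : Fin k => Z k ω - Z (k - 1 - (i : ℕ)) ω) P =
        Measure.map (fun ω => fun i : Fin k => Z ((i : ℕ) + 1) ω) P) (k : ℕ) :
    P {ω | ∀ j < k, Z k ω ≠ Z j ω} = P {ω | ∀ m ∈ Icc 1 k, Z m ω ≠ 0} := by
  set S : Set (Fin k → ℤ) := {v | ∀ i, v i ≠ 0}
  have hS : MeasurableSet S := (Set.to_countable S).measurableSet
  have hmap : Measure.map (fun ω => fun i : Fin k => Z k ω - Z (k - 1 - (i : ℕ)) ω) P =
      Measure.map (fun ω => fun i : Fin k => Z ((i : ℕ) + 1) ω) P := by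
    rcases k.eq_zero_or_pos with rfl | hk
    · exact congrArg₂ _ (funext fun _ => Subsingleton.elim _ _) rfl
    · exact hstat k hk
  have hnew : {ω | ∀ j < k, Z k ω ≠ Z j ω}
      = (fun ω => fun i : Fin k => Z k ω - Z (k - 1 - (i : ℕ)) ω) ⁻¹' S := by
    ext ω
    simp only [Set.mem_ofPred_eq, Set.mem_preimage, S, sub_ne_zero]
    refine ⟨fun h i => h _ (by omega), fun h j hj => ?_⟩
    simpa [show k - 1 - (k - 1 - j) = j by omega] using h ⟨k - 1 - j, by omega⟩
  have hret : {ω | ∀ m ∈ Icc 1 k, Z m ω ≠ 0}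
      = (fun ω => fun i : Fin k => Z ((i : ℕ) + 1) ω) ⁻¹' S := by
    ext ω
    simp only [Set.mem_ofPred_eq, Set.mem_preimage, S, mem_Icc]
    refine ⟨fun h i => h _ ⟨by omega, by omega⟩, fun h m hm => ?_⟩
    simpa [show m - 1 + 1 = m by omega] using h ⟨m - 1, by omega⟩
  rw [hnew, hret, ← Measure.map_apply (by fun_prop) hS, hmap,
    Measure.map_apply (by fun_prop) hS]

end Probability

theorem tail_return_time_asymptotics_general {Ω : Type*} [MeasurableSpace Ω]
    (P : Measure Ω) [IsProbabilityMeasure P]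
    (Z : ℕ → Ω → ℤ) (hZmeas : ∀ n, Measurable (Z n))
    (hstat : ∀ k : ℕ, 1 ≤ k →
      Measure.map (fun ω => fun i : Fin k => Z k ω - Z (k - 1 - (i : ℕ)) ω) P =
        Measure.map (fun ω => fun i : Fin k => Z ((i : ℕ) + 1) ω) P)
    (T0 : Ω → ℕ∞)
    (hT0 : ∀ ω, T0 ω = sInf {t : ℕ∞ | ∃ m : ℕ, (m : ℕ∞) = t ∧ 1 ≤ m ∧ Z m ω = 0})
    (θ L : ℝ)
    (hlim : Tendsto (fun n : ℕ =>
      (∫ ω, (((Finset.range (n + 1)).image (fun k => Z k ω)).card : ℝ) ∂P) / (n : ℝ) ^ θ)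
      atTop (nhds L)) :
    Tendsto (fun n : ℕ => (n : ℝ) ^ (1 - θ) * (P {ω | (n : ℕ∞) < T0 ω}).toReal)
      atTop (nhds (θ * L)) := by
  set a : ℕ → ℝ := fun k => P.real {ω | ∀ m ∈ Icc 1 k, Z m ω ≠ 0}
  have hanti : Antitone a := fun k l hkl =>
    measureReal_mono fun ω h m hm => h m (Icc_subset_Icc_right hkl hm)
  have hmean (n : ℕ) : ∫ ω, (#((range n).image (Z · ω)) : ℝ) ∂P = ∑ k ∈ range n, a k := by
    rw [integral_card_image_range fun k => by measurability]
    simp only [measureReal_def, measure_first_visit_eq_measure_no_return hZmeas hstat, a]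
  have htail (n : ℕ) : (P {ω | (n : ℕ∞) < T0 ω}).toReal = a n := by
    simp only [hT0, natCast_lt_sInf_iff, not_and, a, measureReal_def, mem_Icc, and_imp]
    simp_rw [imp.swap (a := 1 ≤ _)]
  have hsum : Tendsto (fun n : ℕ => (∑ k ∈ range n, a k) / (n : ℝ) ^ θ) atTop (𝓝 L) :=
    tendsto_div_rpow_of_tendsto_succ_div_rpow (by simpa only [hmean] using hlim)
  simpa only [htail] using hanti.tendsto_rpow_one_sub_mul_of_tendsto_sum_range_div_rpow hsum

/-- From mean-range asymptotics to return-time tail asymptotics: if `Z` is an integer-valued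
sequence with `Z 0 = 0` whose backward increment vectors `(Z k − Z (k−1), …, Z k − Z 0)` have
the same law as `(Z 1, …, Z k)`, `R n = #{Z 0, …, Z n}`, `T₀` is the first return time to `0`,
and `E[R n]/n^θ → L` for some `θ ∈ (0,1]`, `L > 0`, then `n^{1−θ} P(T₀ > n) → θ L`. -/
theorem tail_return_time_asymptotics {Ω : Type*} [MeasurableSpace Ω]
    (P : Measure Ω) [IsProbabilityMeasure P]
    (Z : ℕ → Ω → ℤ) (hZmeas : ∀ n, Measurable (Z n)) (hZ0 : ∀ ω, Z 0 ω = 0)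
    (hstat : ∀ k : ℕ, 1 ≤ k →
      Measure.map (fun ω => fun i : Fin k => Z k ω - Z (k - 1 - (i : ℕ)) ω) P =
        Measure.map (fun ω => fun i : Fin k => Z ((i : ℕ) + 1) ω) P)
    (T0 : Ω → ℕ∞)
    (hT0 : ∀ ω, T0 ω = sInf {t : ℕ∞ | ∃ m : ℕ, (m : ℕ∞) = t ∧ 1 ≤ m ∧ Z m ω = 0})
    (θ L : ℝ) (hθ0 : 0 < θ) (hθ1 : θ ≤ 1) (hL : 0 < L)
    (hlim : Tendsto (fun n : ℕ =>
      (∫ ω, (((Finset.range (n + 1)).image (fun k => Z k ω)).card : ℝ) ∂P) / (n : ℝ) ^ θ)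
      atTop (nhds L)) :
    Tendsto (fun n : ℕ => (n : ℝ) ^ (1 - θ) * (P {ω | (n : ℕ∞) < T0 ω}).toReal)
      atTop (nhds (θ * L)) :=
  tail_return_time_asymptotics_general P Z hZmeas hstat T0 hT0 θ L hlim
end
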